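/- arXiv:2212.04791 — 3 statements merged into one kernel-verified Lean document; each statement's English description precedes it below -/
import Mathlib

section
/- Let (a_n)_{n≥1} be a sequence of nonnegative real numbers such that the series ∑_{n=1}^∞ a_n/n converges, and suppose in addition that there is a constant C > 0 such that |a_n − a_{n+1}| ≤ C/n for all n ≥ 1. Then lim_{n→∞} a_n = 0. -/
/-!
If `a n ≥ ε` with `n` large, the bound on the differences keeps `a m ≥ ε / 2` on the window
`n ≤ m ≤ n + δ n` as soon as `C δ ≤ ε / 2`. The window then contributes at least
`δ / (1 + δ) * (ε / 2)` to `∑ a m / m`, a fixed amount, which the Cauchy criterion forbids far out.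
The same argument applied to `-a` bounds `a` from below.
-/

open Filter Finset

lemma Summable.eventually_sum_Icc_lt {f : ℕ → ℝ} (hf : Summable f) {η : ℝ} (hη : 0 < η) :
    ∀ᶠ n in atTop, ∀ m, ∑ i ∈ Icc n m, f i < η := by
  obtain ⟨s, hs⟩ := hf.vanishing (Iio_mem_nhds hη)
  filter_upwards [eventually_gt_atTop (s.sup id)] with n hn m
  refine hs _ (disjoint_left.2 fun i hi his => ?_)
  have his_le : i ≤ s.sup id := le_sup (f := id) his
  have hni : n ≤ i := (mem_Icc.1 hi).1
  omega

lemma sub_mul_div_le_of_sub_div_le {b : ℕ → ℝ} {C : ℝ} (hC : 0 ≤ C)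
    (hb : ∀ n, 1 ≤ n → b n - C / n ≤ b (n + 1)) {n : ℕ} (hn : 1 ≤ n) (j : ℕ) :
    b n - C * j / n ≤ b (n + j) := by
  induction j with
  | zero => simp
  | succ j ih =>
    have hstep := hb (n + j) (by omega)
    have hmono : C / ((n + j : ℕ) : ℝ) ≤ C / n :=
      div_le_div_of_nonneg_left hC (by positivity) (by norm_cast; omega)
    calc b n - C * ((j + 1 : ℕ) : ℝ) / n = b n - C * j / n - C / n := by push_cast; ring
      _ ≤ b (n + j) - C / ((n + j : ℕ) : ℝ) := by linarith
      _ ≤ b (n + (j + 1)) := hstep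

lemma add_one_mul_div_le_sum_Icc_div {b : ℕ → ℝ} {x : ℝ} {n k : ℕ} (hn : 0 < n) (hx : 0 ≤ x)
    (hb : ∀ i ∈ Icc n (n + k), x ≤ b i) :
    (k + 1) * (x / (n + k)) ≤ ∑ i ∈ Icc n (n + k), b i / i := by
  have hterm : ∀ i ∈ Icc n (n + k), x / (n + k) ≤ b i / i := by
    intro i hi
    obtain ⟨hni, hik⟩ := mem_Icc.1 hi
    exact div_le_div₀ (hx.trans (hb i hi)) (hb i hi) (by exact_mod_cast hn.trans_le hni)
      (by exact_mod_cast hik)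
  have hcard := card_nsmul_le_sum _ _ _ hterm
  rwa [Nat.card_Icc, nsmul_eq_mul, show n + k + 1 - n = k + 1 by omega, Nat.cast_succ] at hcard

theorem eventually_lt_of_summable_div_of_sub_div_le {b : ℕ → ℝ}
    (hsum : Summable fun n : ℕ => b n / n) {C : ℝ} (hC : 0 ≤ C)
    (hb : ∀ n, 1 ≤ n → b n - C / n ≤ b (n + 1)) {ε : ℝ} (hε : 0 < ε) :
    ∀ᶠ n in atTop, b n < ε := by
  set δ := ε / 2 / (C + 1) with hδ_def
  have hδ : 0 < δ := by positivity
  have hCδ : C * δ ≤ ε / 2 :=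
    calc C * δ = ε / 2 * (C / (C + 1)) := by rw [hδ_def]; ring
      _ ≤ ε / 2 :=
        mul_le_of_le_one_right (by positivity) (div_le_one_of_le₀ (by linarith) (by positivity))
  filter_upwards [hsum.eventually_sum_Icc_lt (by positivity : 0 < δ / (1 + δ) * (ε / 2)),
    eventually_ge_atTop 1] with n hwindow hn
  by_contra! hbn
  set k := ⌊δ * n⌋₊
  have hk : (k : ℝ) ≤ δ * n := Nat.floor_le (by positivity)
  have hk' : δ * n < k + 1 := Nat.lt_floor_add_one _
  have hlow : ∀ i ∈ Icc n (n + k), ε / 2 ≤ b i := by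
    intro i hi
    obtain ⟨j, hj, rfl⟩ : ∃ j ≤ k, n + j = i := ⟨i - n, by grind, by grind⟩
    have hdrift : C * j / n ≤ C * δ := by
      rw [div_le_iff₀ (by positivity), mul_assoc]
      exact mul_le_mul_of_nonneg_left ((Nat.cast_le.2 hj).trans hk) hC
    linarith [sub_mul_div_le_of_sub_div_le hC hb hn j]
  have hratio : δ / (1 + δ) ≤ (k + 1) / (n + k) := by
    rw [div_le_div_iff₀ (by positivity) (by positivity)]
    nlinarith
  have hcontra := calc δ / (1 + δ) * (ε / 2)
      ≤ (k + 1) / (n + k) * (ε / 2) := by gcongr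
    _ = (k + 1) * (ε / 2 / (n + k)) := by ring
    _ ≤ ∑ i ∈ Icc n (n + k), b i / i := add_one_mul_div_le_sum_Icc_div hn (by positivity) hlow
    _ < δ / (1 + δ) * (ε / 2) := hwindow (n + k)
  exact lt_irrefl _ hcontra

theorem tendsto_zero_of_summable_div_of_diff_le_general (a : ℕ → ℝ)
    (hsum : Summable fun n : ℕ => a (n + 1) / ((n : ℝ) + 1))
    (C : ℝ) (hC : 0 < C)
    (hdiff : ∀ n : ℕ, 1 ≤ n → |a n - a (n + 1)| ≤ C / (n : ℝ)) :
    Filter.Tendsto a Filter.atTop (nhds 0) := by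
  have hsum' : Summable fun n : ℕ => a n / n :=
    (summable_nat_add_iff 1).1 (by exact_mod_cast hsum)
  refine tendsto_order.2 ⟨fun ε hε => ?_, fun ε hε => ?_⟩
  · have hneg := eventually_lt_of_summable_div_of_sub_div_le (b := fun n => -a n)
      (by simpa only [neg_div] using hsum'.neg) hC.le
      (fun n hn => by linarith [(abs_le.1 (hdiff n hn)).1]) (neg_pos.2 hε)
    exact hneg.mono fun n hn => neg_lt_neg_iff.1 hn
  · exact eventually_lt_of_summable_div_of_sub_div_le hsum' hC.le
      (fun n hn => by linarith [(abs_le.1 (hdiff n hn)).2]) hε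

/-- If `(a n)` is a sequence of nonnegative reals with `∑ a n / n`
convergent and `|a n - a (n+1)| ≤ C / n`, then `a n → 0`. -/
theorem tendsto_zero_of_summable_div_of_diff_le (a : ℕ → ℝ) (ha : ∀ n, 1 ≤ n → 0 ≤ a n)
    (hsum : Summable fun n : ℕ => a (n + 1) / ((n : ℝ) + 1))
    (C : ℝ) (hC : 0 < C)
    (hdiff : ∀ n : ℕ, 1 ≤ n → |a n - a (n + 1)| ≤ C / (n : ℝ)) :
    Filter.Tendsto a Filter.atTop (nhds 0) :=
  tendsto_zero_of_summable_div_of_diff_le_general a hsum C hC hdiff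
end

section
/- Let R₀, R > 0 and let p ∈ ℝ^d satisfy ‖p‖ ≤ R₀ and ‖∇H(p)‖ ≤ R. Then for every q ∈ ℝ^d with ‖q‖ ≤ R, one has the lower bound (1/(2C̄))·‖q − ∇H(p)‖² ≤ H(p) + L(q) − ⟨p,q⟩. -/
/-!
Along a line `t ↦ H (p + t • w)` the Hessian bounds give the second-order Taylor bounds
`H p + ⟪∇H p, w⟫ + ‖w‖² / (2 C̄) ≤ H (p + w) ≤ H p + ⟪∇H p, w⟫ + C̄ ‖w‖² / 2`
(in one variable this is the tangent-line inequality for the convex function `g - K t² / 2`).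
The lower bound makes the supremum defining `L q` finite; evaluating that supremum at the point
`p + (q - ∇H p) / C̄` and using the upper bound gives the claim.
-/

open scoped RealInnerProductSpace
open Set

theorem add_deriv_add_half_le_of_le_deriv2 {g g' g'' : ℝ → ℝ} {K : ℝ}
    (hg : ∀ t, HasDerivAt g (g' t) t) (hg' : ∀ t, HasDerivAt g' (g'' t) t)
    (hK : ∀ t, K ≤ g'' t) : g 0 + g' 0 + K / 2 ≤ g 1 := by
  have hψ : ∀ t, HasDerivAt (fun t => g t - K / 2 * t ^ 2) (g' t - K * t) t := fun t =>
    ((hg t).sub ((hasDerivAt_pow 2 t).const_mul (K / 2))).congr_deriv (by norm_num; ring)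
  have hψ' : ∀ t, HasDerivAt (fun t => g' t - K * t) (g'' t - K) t := fun t =>
    (hg' t).sub (by simpa using (hasDerivAt_id t).const_mul K)
  have hconvex : ConvexOn ℝ univ (fun t => g t - K / 2 * t ^ 2) :=
    convexOn_of_hasDerivWithinAt2_nonneg convex_univ
      (continuous_iff_continuousAt.2 fun t => (hψ t).continuousAt).continuousOn
      (fun t _ => (hψ t).hasDerivWithinAt) (fun t _ => (hψ' t).hasDerivWithinAt)
      (fun t _ => sub_nonneg.2 (hK t))
  have := hconvex.le_slope_of_hasDerivAt (mem_univ 0) (mem_univ 1) zero_lt_one (hψ 0)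
  rw [slope_def_field] at this
  linarith

section Line

variable {E F : Type*} [NormedAddCommGroup E] [NormedSpace ℝ E]
  [NormedAddCommGroup F] [NormedSpace ℝ F]

theorem hasDerivAt_comp_add_smul {f : E → F} (hf : Differentiable ℝ f) (p w : E) (t : ℝ) :
    HasDerivAt (fun s : ℝ => f (p + s • w)) (fderiv ℝ f (p + t • w) w) t :=
  (hf _).hasFDerivAt.comp_hasDerivAt t
    (by simpa using ((hasDerivAt_id t).smul_const w).const_add p)

theorem add_fderiv_add_half_le_of_le_iteratedFDeriv_two {f : E → ℝ} (hf : ContDiff ℝ 2 f)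
    {K : ℝ} {p w : E} (hK : ∀ x, K ≤ iteratedFDeriv ℝ 2 f x ![w, w]) :
    f p + fderiv ℝ f p w + K / 2 ≤ f (p + w) := by
  have hf' : Differentiable ℝ (fderiv ℝ f) :=
    (hf.fderiv_right (m := 1) le_rfl).differentiable one_ne_zero
  simpa using add_deriv_add_half_le_of_le_deriv2
    (hasDerivAt_comp_add_smul (hf.differentiable (by norm_num)) p w)
    (fun t => (hasDerivAt_comp_add_smul hf' p w t).clm_apply (hasDerivAt_const t w))
    (fun t => by simpa [iteratedFDeriv_two_apply] using hK (p + t • w))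

theorem le_add_fderiv_add_half_of_iteratedFDeriv_two_le {f : E → ℝ} (hf : ContDiff ℝ 2 f)
    {K : ℝ} {p w : E} (hK : ∀ x, iteratedFDeriv ℝ 2 f x ![w, w] ≤ K) :
    f (p + w) ≤ f p + fderiv ℝ f p w + K / 2 := by
  have := add_fderiv_add_half_le_of_le_iteratedFDeriv_two (f := -f) hf.neg (K := -K) (p := p)
    (w := w) (fun x => by simpa [iteratedFDeriv_neg_apply] using hK x)
  simp only [fderiv_neg, Pi.neg_apply, neg_apply, neg_div] at this
  linarith

end Line

section Conjugate

variable {F : Type*} [NormedAddCommGroup F] [InnerProductSpace ℝ F]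

/-- `⨆` makes this `0` wherever the supremum is unbounded, hence the `BddAbove` hypotheses. -/
noncomputable def fenchelConjugate (f : F → ℝ) (q : F) : ℝ := ⨆ x, ⟪x, q⟫ - f x

theorem bddAbove_range_inner_sub_of_quadratic_minorant {f : F → ℝ} {c m : ℝ} {g : F}
    (hm : 0 < m) (hf : ∀ x, c + ⟪g, x⟫ + m * ‖x‖ ^ 2 / 2 ≤ f x) (q : F) :
    BddAbove (range fun x => ⟪x, q⟫ - f x) := by
  refine ⟨‖q - g‖ ^ 2 / (2 * m) - c, ?_⟩
  rintro _ ⟨x, rfl⟩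
  have hinner : ⟪x, q⟫ - ⟪g, x⟫ ≤ ‖x‖ * ‖q - g‖ := by
    rw [real_inner_comm x g, ← inner_sub_right]
    exact real_inner_le_norm x (q - g)
  have hsq : ‖x‖ * ‖q - g‖ - m * ‖x‖ ^ 2 / 2 ≤ ‖q - g‖ ^ 2 / (2 * m) := by
    rw [le_div_iff₀ (by positivity)]
    nlinarith [sq_nonneg (m * ‖x‖ - ‖q - g‖)]
  linarith [hf x]

theorem sq_norm_sub_le_fenchel_gap_of_quadratic_majorant {f : F → ℝ} {C : ℝ} (hC : 0 < C)
    {p G : F} (hf : ∀ w, f (p + w) ≤ f p + ⟪G, w⟫ + C * ‖w‖ ^ 2 / 2) {q : F}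
    (hbdd : BddAbove (range fun x => ⟪x, q⟫ - f x)) :
    1 / (2 * C) * ‖q - G‖ ^ 2 ≤ f p + fenchelConjugate f q - ⟪p, q⟫ := by
  set w := C⁻¹ • (q - G)
  have hconj : ⟪p + w, q⟫ - f (p + w) ≤ fenchelConjugate f q := le_ciSup hbdd (p + w)
  have hgain : ⟪w, q⟫ - ⟪G, w⟫ = C⁻¹ * ‖q - G‖ ^ 2 := by
    rw [real_inner_comm w G, ← inner_sub_right, real_inner_smul_left, real_inner_self_eq_norm_sq]
  have hnorm : ‖w‖ ^ 2 = C⁻¹ ^ 2 * ‖q - G‖ ^ 2 := by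
    rw [norm_smul, mul_pow, Real.norm_of_nonneg (inv_nonneg.2 hC.le)]
  have hquad :
      C⁻¹ * ‖q - G‖ ^ 2 - C * (C⁻¹ ^ 2 * ‖q - G‖ ^ 2) / 2 = 1 / (2 * C) * ‖q - G‖ ^ 2 := by
    field_simp; ring
  have hmodel := hf w
  rw [hnorm] at hmodel
  rw [inner_add_left] at hconj
  linarith

end Conjugate

theorem fenchel_gap_lower_bound_general (d : ℕ) (Cb : ℝ) (hCb : 0 < Cb)
    (H : EuclideanSpace ℝ (Fin d) → ℝ) (hH : ContDiff ℝ 2 H)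
    (hHess : ∀ p v : EuclideanSpace ℝ (Fin d),
      (1 / Cb) * ‖v‖ ^ 2 ≤ iteratedFDeriv ℝ 2 H p ![v, v] ∧
        iteratedFDeriv ℝ 2 H p ![v, v] ≤ Cb * ‖v‖ ^ 2)
    (L : EuclideanSpace ℝ (Fin d) → ℝ)
    (hL : ∀ q, L q = ⨆ p : EuclideanSpace ℝ (Fin d), (⟪p, q⟫ - H p))
    (R : ℝ)
    (p : EuclideanSpace ℝ (Fin d)) :
    ∀ q : EuclideanSpace ℝ (Fin d), ‖q‖ ≤ R →
      (1 / (2 * Cb)) * ‖q - gradient H p‖ ^ 2 ≤ H p + L q - ⟪p, q⟫ := by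
  intro q _
  have hminorant (x) : H 0 + ⟪gradient H 0, x⟫ + 1 / Cb * ‖x‖ ^ 2 / 2 ≤ H x := by
    simpa only [zero_add, inner_gradient_left] using
      add_fderiv_add_half_le_of_le_iteratedFDeriv_two hH (p := 0) fun y => (hHess y x).1
  have hmajorant (w) : H (p + w) ≤ H p + ⟪gradient H p, w⟫ + Cb * ‖w‖ ^ 2 / 2 := by
    simpa only [inner_gradient_left] using
      le_add_fderiv_add_half_of_iteratedFDeriv_two_le hH (p := p) fun y => (hHess y w).2
  rw [show L = fenchelConjugate H from funext hL]
  exact sq_norm_sub_le_fenchel_gap_of_quadratic_majorant hCb hmajorant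
    (bddAbove_range_inner_sub_of_quadratic_minorant (one_div_pos.2 hCb) hminorant q)

/-- Lower bound: `(1/(2C̄)) ‖q - ∇H p‖² ≤ H p + L q - ⟨p, q⟩` whenever
`‖p‖ ≤ R₀`, `‖∇H p‖ ≤ R` and `‖q‖ ≤ R`. -/
theorem fenchel_gap_lower_bound (d : ℕ) (hd : 1 ≤ d) (Cb : ℝ) (hCb : 0 < Cb)
    (H : EuclideanSpace ℝ (Fin d) → ℝ) (hH : ContDiff ℝ 2 H)
    (hHess : ∀ p v : EuclideanSpace ℝ (Fin d),
      (1 / Cb) * ‖v‖ ^ 2 ≤ iteratedFDeriv ℝ 2 H p ![v, v] ∧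
        iteratedFDeriv ℝ 2 H p ![v, v] ≤ Cb * ‖v‖ ^ 2)
    (L : EuclideanSpace ℝ (Fin d) → ℝ)
    (hL : ∀ q, L q = ⨆ p : EuclideanSpace ℝ (Fin d), (⟪p, q⟫ - H p))
    (R₀ R : ℝ) (hR₀ : 0 < R₀) (hR : 0 < R)
    (p : EuclideanSpace ℝ (Fin d)) (hp : ‖p‖ ≤ R₀) (hgp : ‖gradient H p‖ ≤ R) :
    ∀ q : EuclideanSpace ℝ (Fin d), ‖q‖ ≤ R →
      (1 / (2 * Cb)) * ‖q - gradient H p‖ ^ 2 ≤ H p + L q - ⟪p, q⟫ :=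
  fenchel_gap_lower_bound_general d Cb hCb H hH hHess L hL R p
end

section
/- Let R₀, R > 0. There exists a constant C > 0, depending only on C̄, R₀ and R, such that for every p ∈ ℝ^d with ‖p‖ ≤ R₀ and ‖∇H(p)‖ ≤ R, and every q ∈ ℝ^d with ‖q‖ ≤ R, one has the upper bound H(p) + L(q) − ⟨p,q⟩ ≤ C·‖q − ∇H(p)‖. -/
open scoped RealInnerProductSpace

/-! The Hessian lower bound makes `H` `(1/C̄)`-strongly convex, so
`H y ≥ H p + ⟪∇H p, y - p⟫ + ‖y - p‖² / (2C̄)` for every `y`. Hence, with `w = q - ∇H p`,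
`⟪y, q⟫ - H y ≤ ⟪p, q⟫ - H p + ⟪y - p, w⟫ - ‖y - p‖² / (2C̄) ≤ ⟪p, q⟫ - H p + C̄ ‖w‖² / 2`,
and taking the supremum over `y` bounds the Fenchel gap by `C̄ ‖w‖² / 2`. Since `‖w‖ ≤ 2R`,
this is at most `C̄ R ‖w‖`. -/

lemma add_add_half_le_of_hasDerivAt_of_le_deriv {f f' f'' : ℝ → ℝ} {m : ℝ}
    (hf : ∀ t, HasDerivAt f (f' t) t) (hf' : ∀ t, HasDerivAt f' (f'' t) t)
    (hm : ∀ t, m ≤ f'' t) :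
    f 0 + f' 0 + m / 2 ≤ f 1 := by
  -- `f t - m t² / 2` has nonnegative second derivative, so lies above its tangent at `0`.
  have hφ (t : ℝ) : HasDerivAt (fun s => f s - m / 2 * s ^ 2) (f' t - m * t) t := by
    refine ((hf t).fun_sub ((hasDerivAt_pow 2 t).const_mul (m / 2))).congr_deriv ?_
    norm_num
    ring
  have hφ' (t : ℝ) : HasDerivAt (fun s => f' s - m * s) (f'' t - m) t := by
    simpa using (hf' t).fun_sub ((hasDerivAt_id' t).const_mul m)
  have hconvex : ConvexOn ℝ Set.univ (fun s => f s - m / 2 * s ^ 2) :=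
    convexOn_of_hasDerivWithinAt2_nonneg convex_univ
      (fun t _ => (hφ t).continuousAt.continuousWithinAt)
      (fun t _ => (hφ t).hasDerivWithinAt) (fun t _ => (hφ' t).hasDerivWithinAt)
      (fun t _ => sub_nonneg.mpr (hm t))
  have := hconvex.le_slope_of_hasDerivAt (Set.mem_univ 0) (Set.mem_univ 1) one_pos (hφ 0)
  simp only [slope_def_field] at this
  norm_num at this
  linarith

section LineRestriction

variable {E : Type*} [NormedAddCommGroup E] [NormedSpace ℝ E] {H : E → ℝ}

lemma ContDiff.hasDerivAt_comp_line (hH : ContDiff ℝ 2 H) (x u : E) (t : ℝ) :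
    HasDerivAt (fun s : ℝ => H (x + s • u)) (fderiv ℝ H (x + t • u) u) t := by
  have hline : HasDerivAt (fun s : ℝ => x + s • u) u t := by
    simpa using ((hasDerivAt_id t).smul_const u).const_add x
  exact ((hH.differentiable two_ne_zero _).hasFDerivAt).comp_hasDerivAt t hline

lemma ContDiff.hasDerivAt_fderiv_comp_line (hH : ContDiff ℝ 2 H) (x u : E) (t : ℝ) :
    HasDerivAt (fun s : ℝ => fderiv ℝ H (x + s • u) u)
      (iteratedFDeriv ℝ 2 H (x + t • u) ![u, u]) t := by
  have hline : HasDerivAt (fun s : ℝ => x + s • u) u t := by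
    simpa using ((hasDerivAt_id t).smul_const u).const_add x
  have hDH : Differentiable ℝ (fderiv ℝ H) :=
    (hH.fderiv_right (by norm_num : (1 : WithTop ℕ∞) + 1 ≤ 2)).differentiable one_ne_zero
  rw [iteratedFDeriv_two_apply]
  exact ((ContinuousLinearMap.apply ℝ ℝ u).hasFDerivAt.comp _
    (hDH _).hasFDerivAt).comp_hasDerivAt t hline

lemma ContDiff.add_fderiv_add_half_mul_sq_le (hH : ContDiff ℝ 2 H) {m : ℝ}
    (hm : ∀ p v, m * ‖v‖ ^ 2 ≤ iteratedFDeriv ℝ 2 H p ![v, v]) (x y : E) :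
    H x + fderiv ℝ H x (y - x) + m / 2 * ‖y - x‖ ^ 2 ≤ H y := by
  have := add_add_half_le_of_hasDerivAt_of_le_deriv (hH.hasDerivAt_comp_line x (y - x))
    (hH.hasDerivAt_fderiv_comp_line x (y - x)) (fun t => hm (x + t • (y - x)) (y - x))
  simp only [zero_smul, add_zero, one_smul, add_sub_cancel] at this
  linarith

end LineRestriction

section InnerProductSpace

variable {E : Type*} [NormedAddCommGroup E] [InnerProductSpace ℝ E] {H : E → ℝ}

lemma ContDiff.add_inner_gradient_add_half_mul_sq_le [CompleteSpace E] (hH : ContDiff ℝ 2 H)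
    {m : ℝ} (hm : ∀ p v, m * ‖v‖ ^ 2 ≤ iteratedFDeriv ℝ 2 H p ![v, v]) (x y : E) :
    H x + ⟪gradient H x, y - x⟫ + m / 2 * ‖y - x‖ ^ 2 ≤ H y := by
  rw [inner_gradient_left]
  exact hH.add_fderiv_add_half_mul_sq_le hm x y

lemma iSup_inner_sub_le_of_forall_add_inner_add_half_mul_sq_le {m : ℝ} (hm : 0 < m) {p g : E}
    (hH : ∀ y, H p + ⟪g, y - p⟫ + m / 2 * ‖y - p‖ ^ 2 ≤ H y) (q : E) :
    ⨆ y, (⟪y, q⟫ - H y) ≤ ⟪p, q⟫ - H p + ‖q - g‖ ^ 2 / (2 * m) := by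
  refine ciSup_le fun y => ?_
  have hinner : ⟪y, q⟫ - ⟪p, q⟫ - ⟪g, y - p⟫ = ⟪y - p, q - g⟫ := by
    simp only [inner_sub_left, inner_sub_right, real_inner_comm g]
  have hyoung : ⟪y - p, q - g⟫ ≤ m / 2 * ‖y - p‖ ^ 2 + ‖q - g‖ ^ 2 / (2 * m) := by
    have hcs := real_inner_le_norm (y - p) (q - g)
    have hsq : 0 ≤ (m * ‖y - p‖ - ‖q - g‖) ^ 2 / (2 * m) := by positivity
    have hexpand : (m * ‖y - p‖ - ‖q - g‖) ^ 2 / (2 * m)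
        = m / 2 * ‖y - p‖ ^ 2 + ‖q - g‖ ^ 2 / (2 * m) - ‖y - p‖ * ‖q - g‖ := by
      field_simp
      ring
    linarith
  linarith [hH y]

end InnerProductSpace

theorem fenchel_gap_upper_bound_general (d : ℕ) (Cb : ℝ) (hCb : 0 < Cb)
    (H : EuclideanSpace ℝ (Fin d) → ℝ) (hH : ContDiff ℝ 2 H)
    (hHess : ∀ p v : EuclideanSpace ℝ (Fin d),
      (1 / Cb) * ‖v‖ ^ 2 ≤ iteratedFDeriv ℝ 2 H p ![v, v] ∧
        iteratedFDeriv ℝ 2 H p ![v, v] ≤ Cb * ‖v‖ ^ 2)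
    (L : EuclideanSpace ℝ (Fin d) → ℝ)
    (hL : ∀ q, L q = ⨆ p : EuclideanSpace ℝ (Fin d), (⟪p, q⟫ - H p))
    (R₀ R : ℝ) (hR : 0 < R) :
    ∃ C : ℝ, 0 < C ∧
      ∀ p q : EuclideanSpace ℝ (Fin d), ‖p‖ ≤ R₀ → ‖gradient H p‖ ≤ R → ‖q‖ ≤ R →
        H p + L q - ⟪p, q⟫ ≤ C * ‖q - gradient H p‖ := by
  refine ⟨Cb * R + 1, by positivity, fun p q _ hgrad hq => ?_⟩
  have hLq := iSup_inner_sub_le_of_forall_add_inner_add_half_mul_sq_le (one_div_pos.mpr hCb)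
    (hH.add_inner_gradient_add_half_mul_sq_le (fun p v => (hHess p v).1) p) q
  rw [← hL] at hLq
  have hw : ‖q - gradient H p‖ ≤ 2 * R :=
    (norm_sub_le _ _).trans (by linarith)
  have hw0 := norm_nonneg (q - gradient H p)
  calc H p + L q - ⟪p, q⟫ ≤ Cb / 2 * ‖q - gradient H p‖ * ‖q - gradient H p‖ := by
        field_simp at hLq ⊢
        linarith
    _ ≤ Cb / 2 * (2 * R) * ‖q - gradient H p‖ := by gcongr
    _ ≤ (Cb * R + 1) * ‖q - gradient H p‖ := by nlinarith

/-- Upper bound: there exists `C > 0` (depending only on `C̄, R₀, R`)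
such that `H p + L q - ⟨p, q⟩ ≤ C ‖q - ∇H p‖` whenever `‖p‖ ≤ R₀`, `‖∇H p‖ ≤ R`,
`‖q‖ ≤ R`. -/
theorem fenchel_gap_upper_bound (d : ℕ) (hd : 1 ≤ d) (Cb : ℝ) (hCb : 0 < Cb)
    (H : EuclideanSpace ℝ (Fin d) → ℝ) (hH : ContDiff ℝ 2 H)
    (hHess : ∀ p v : EuclideanSpace ℝ (Fin d),
      (1 / Cb) * ‖v‖ ^ 2 ≤ iteratedFDeriv ℝ 2 H p ![v, v] ∧
        iteratedFDeriv ℝ 2 H p ![v, v] ≤ Cb * ‖v‖ ^ 2)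
    (L : EuclideanSpace ℝ (Fin d) → ℝ)
    (hL : ∀ q, L q = ⨆ p : EuclideanSpace ℝ (Fin d), (⟪p, q⟫ - H p))
    (R₀ R : ℝ) (hR₀ : 0 < R₀) (hR : 0 < R) :
    ∃ C : ℝ, 0 < C ∧
      ∀ p q : EuclideanSpace ℝ (Fin d), ‖p‖ ≤ R₀ → ‖gradient H p‖ ≤ R → ‖q‖ ≤ R →
        H p + L q - ⟪p, q⟫ ≤ C * ‖q - gradient H p‖ :=
  fenchel_gap_upper_bound_general d Cb hCb H hH hHess L hL R₀ R hR
end
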